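/- arXiv:0810.1931 — 5 statements merged into one kernel-verified Lean document; each statement's English description precedes it below -/
import Mathlib

section
/- For all integers n ≥ 0, c_2(3n + 2) ≡ 0 (mod 3), where c_2(n) is defined by ∑_{n≥0} c_2(n) q^n = ∏_{n≥1} 1/((1-q^n)(1-q^{2n})). -/
/-!
Put `F = (q;q)_∞ (q²;q²)_∞`, so that `∑ c₂(n) qⁿ = 1 / F`. Over `𝔽₃` Frobenius gives `F³ = F(q³)`,
hence `1 / F = F² / F(q³)`. Gauss's identity `(q;q)_∞² = φ(-q) (q²;q²)_∞`, with
`φ(-q) = ∑_{k ∈ ℤ} (-1)^k q^{k²}`, gives `F² = φ(-q) (q²;q²)_∞³ = φ(-q) (q⁶;q⁶)_∞` over `𝔽₃`, so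
`1 / F = φ(-q) · H(q³)` for some `H`. No square is `2 mod 3`, so the coefficients of `q^{3n+2}` vanish.

Gauss's identity is the limit of its finite form
`∏_{i<N} (1 - q^{2i+1})² = ∑_{|k| ≤ N} (-1)^k q^{k²} [2N, N+k]_{q²}`, proved by induction from the
two `q`-Pascal recurrences; infinite products only enter through their truncations modulo `q^d`.
-/

open Finset

noncomputable section

namespace PowerSeries

variable {R : Type*} [CommRing R]

def qPoch (n : ℕ) : R⟦X⟧ := ∏ i ∈ range n, (1 - X ^ (i + 1))

@[simp] lemma qPoch_zero : qPoch 0 = (1 : R⟦X⟧) := prod_range_zero _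

lemma qPoch_succ (n : ℕ) : qPoch (n + 1) = qPoch n * (1 - X ^ (n + 1) : R⟦X⟧) :=
  prod_range_succ _ n

lemma isUnit_qPoch (n : ℕ) : IsUnit (qPoch n : R⟦X⟧) := by
  simp [isUnit_iff_constantCoeff, qPoch]

lemma X_pow_dvd_prod_range_sub {g : ℕ → R⟦X⟧} (hg : ∀ i, X ^ (i + 1) ∣ g i - 1) {n m : ℕ}
    (h : n ≤ m) : X ^ (n + 1) ∣ ∏ i ∈ range m, g i - ∏ i ∈ range n, g i := by
  induction m, h using Nat.le_induction with
  | base => simp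
  | succ m hnm ih =>
    rw [prod_range_succ, show (∏ i ∈ range m, g i) * g m - ∏ i ∈ range n, g i
      = (∏ i ∈ range m, g i) * (g m - 1) + (∏ i ∈ range m, g i - ∏ i ∈ range n, g i) by ring]
    exact dvd_add (((pow_dvd_pow X (by omega)).trans (hg m)).mul_left _) ih

lemma X_pow_dvd_qPoch_sub {n m : ℕ} (h : n ≤ m) :
    (X : R⟦X⟧) ^ (n + 1) ∣ qPoch m - qPoch n :=
  X_pow_dvd_prod_range_sub (fun _ => by simp) h

lemma X_pow_dvd_qPoch_sub_qPoch {a m n : ℕ} (hm : a ≤ m) (hn : a ≤ n) :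
    (X : R⟦X⟧) ^ (a + 1) ∣ qPoch m - qPoch n := by
  simpa using dvd_sub (X_pow_dvd_qPoch_sub (R := R) hm) (X_pow_dvd_qPoch_sub hn)

-- `Ring.inverse` is a genuine inverse here, by `isUnit_qPoch`.
def qBinom (m : ℕ) (k : ℤ) : R⟦X⟧ :=
  if 0 ≤ k ∧ k ≤ m then qPoch m * Ring.inverse (qPoch k.toNat * qPoch (m - k.toNat)) else 0

lemma qBinom_eq_zero {m : ℕ} {k : ℤ} (hk : k < 0 ∨ m < k) : qBinom m k = (0 : R⟦X⟧) :=
  if_neg (by omega)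

lemma qBinom_mul_qPoch_mul_qPoch {m j : ℕ} (h : j ≤ m) :
    qBinom m j * (qPoch j * qPoch (m - j)) = (qPoch m : R⟦X⟧) := by
  rw [qBinom, if_pos (by omega), Int.toNat_natCast,
    Ring.inverse_mul_cancel_right _ _ ((isUnit_qPoch j).mul (isUnit_qPoch _))]

lemma eq_qBinom_of_mul {m j : ℕ} (h : j ≤ m) {g : R⟦X⟧}
    (hg : g * (qPoch j * qPoch (m - j)) = qPoch m) : g = qBinom m j :=
  ((isUnit_qPoch j).mul (isUnit_qPoch _)).mul_left_injective
    (hg.trans (qBinom_mul_qPoch_mul_qPoch h).symm)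

lemma qBinom_symm (m : ℕ) (k : ℤ) : qBinom m (m - k) = (qBinom m k : R⟦X⟧) := by
  by_cases hk : 0 ≤ k ∧ k ≤ m
  · rw [qBinom, qBinom, if_pos (by omega), if_pos hk, mul_comm (qPoch k.toNat),
      show ((m : ℤ) - k).toNat = m - k.toNat by omega, show m - (m - k.toNat) = k.toNat by omega]
  · rw [qBinom_eq_zero (by omega), qBinom_eq_zero (by omega)]

lemma qBinom_mul_qPoch_mul_qPoch_succ {m j : ℕ} (h : j ≤ m + 1) :
    qBinom m j * (qPoch j * qPoch (m + 1 - j)) = (qPoch m * (1 - X ^ (m + 1 - j)) : R⟦X⟧) := by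
  rcases h.lt_or_eq with h | rfl
  · rw [show m + 1 - j = m - j + 1 by omega, qPoch_succ,
      ← qBinom_mul_qPoch_mul_qPoch (R := R) (show j ≤ m by omega)]
    ring
  · simp [qBinom_eq_zero]

lemma qBinom_sub_one_mul_qPoch_mul_qPoch {m j : ℕ} (h : j ≤ m + 1) :
    qBinom m (j - 1) * (qPoch j * qPoch (m + 1 - j)) = (qPoch m * (1 - X ^ j) : R⟦X⟧) := by
  have := qBinom_mul_qPoch_mul_qPoch_succ (R := R) (m := m) (j := m + 1 - j) (by omega)
  rwa [show m + 1 - (m + 1 - j) = j by omega, ← qBinom_symm, mul_comm (qPoch _),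
    show (m : ℤ) - (m + 1 - j : ℕ) = j - 1 by omega] at this

lemma qBinom_succ (m : ℕ) (k : ℤ) :
    qBinom (m + 1) k = (X ^ k.toNat * qBinom m k + qBinom m (k - 1) : R⟦X⟧) := by
  by_cases hk : 0 ≤ k ∧ k ≤ m + 1
  · obtain ⟨j, rfl⟩ : ∃ j : ℕ, k = j := ⟨k.toNat, by omega⟩
    have hj : j ≤ m + 1 := by omega
    refine (eq_qBinom_of_mul hj ?_).symm
    have hpow : (X : R⟦X⟧) ^ j * X ^ (m + 1 - j) = X ^ (m + 1) := by
      rw [← pow_add, Nat.add_sub_cancel' hj]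
    rw [add_mul, mul_assoc, qBinom_mul_qPoch_mul_qPoch_succ hj,
      qBinom_sub_one_mul_qPoch_mul_qPoch hj, qPoch_succ, Int.toNat_natCast]
    linear_combination (-qPoch m) * hpow
  · rw [qBinom_eq_zero (by omega), qBinom_eq_zero (by omega),
      qBinom_eq_zero (by omega), mul_zero, add_zero]

lemma qBinom_succ' (m : ℕ) (k : ℤ) :
    qBinom (m + 1) k = (qBinom m k + X ^ (m + 1 - k).toNat * qBinom m (k - 1) : R⟦X⟧) := by
  rw [← qBinom_symm (m + 1), qBinom_succ, ← qBinom_symm m, ← qBinom_symm m (_ - 1)]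
  push_cast
  rw [show (m : ℤ) - (m + 1 - k) = k - 1 by ring, show (m : ℤ) - (m + 1 - k - 1) = k by ring]
  ring

lemma qBinom_add_two (m : ℕ) (j : ℤ) :
    qBinom (m + 2) j = (X ^ j.toNat * qBinom m j + (1 + X ^ (m + 1)) * qBinom m (j - 1)
      + X ^ (m + 2 - j).toNat * qBinom m (j - 2) : R⟦X⟧) := by
  rw [qBinom_succ', qBinom_succ, qBinom_succ, show j - 1 - 1 = j - 2 by ring,
    show ((m + 1 : ℕ) : ℤ) + 1 - j = m + 2 - j by push_cast; ring]
  by_cases hj : 0 ≤ j - 1 ∧ j - 1 ≤ m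
  · have hpow : (X : R⟦X⟧) ^ (m + 2 - j).toNat * X ^ (j - 1).toNat = X ^ (m + 1) := by
      rw [← pow_add]; congr 1; omega
    linear_combination qBinom m (j - 1) * hpow
  · rw [qBinom_eq_zero (k := j - 1) (by omega)]
    ring

def oddPoch (n : ℕ) : R⟦X⟧ := ∏ i ∈ range n, (1 - X ^ (2 * i + 1))

lemma qPoch_two_mul (n : ℕ) :
    qPoch (2 * n) = (oddPoch n * expand 2 two_ne_zero (qPoch n) : R⟦X⟧) := by
  induction n with
  | zero => simp [oddPoch]
  | succ n ih =>
    rw [show 2 * (n + 1) = 2 * n + 1 + 1 by ring, qPoch_succ, qPoch_succ, ih, qPoch_succ n]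
    simp only [oddPoch, prod_range_succ, map_mul, map_sub, map_one, map_pow, expand_X]
    ring

-- The `k`-th term of the finite Jacobi triple product at `z = -1`, with `q²`-binomials.
def jacobiTerm (N : ℕ) (k : ℤ) : R⟦X⟧ :=
  (k.negOnePow : R⟦X⟧) * X ^ (k.natAbs ^ 2) * expand 2 two_ne_zero (qBinom (2 * N) (N + k))

lemma jacobiTerm_of_notMem {N : ℕ} {k : ℤ} (hk : k ∉ Icc (-N : ℤ) N) :
    jacobiTerm N k = (0 : R⟦X⟧) := by
  rw [mem_Icc] at hk
  rw [jacobiTerm, qBinom_eq_zero (by push_cast; omega), map_zero, mul_zero]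

lemma X_pow_mul_expand_qBinom_congr {a b m : ℕ} {j : ℤ} (h : 0 ≤ j → j ≤ m → a = b) :
    X ^ a * expand 2 two_ne_zero (qBinom m j)
      = (X ^ b * expand 2 two_ne_zero (qBinom m j) : R⟦X⟧) := by
  by_cases hj : 0 ≤ j ∧ j ≤ m
  · rw [h hj.1 hj.2]
  · rw [qBinom_eq_zero (by omega), map_zero, mul_zero, mul_zero]

lemma jacobiTerm_succ (N : ℕ) (k : ℤ) :
    jacobiTerm (N + 1) k = ((1 + X ^ (4 * N + 2)) * jacobiTerm N k
      - X ^ (2 * N + 1) * (jacobiTerm N (k + 1) + jacobiTerm N (k - 1)) : R⟦X⟧) := by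
  have h1 : X ^ (k.natAbs ^ 2) * X ^ (2 * (N + (k + 1)).toNat) *
      expand 2 two_ne_zero (qBinom (2 * N) (N + (k + 1)))
      = (X ^ (2 * N + 1) * X ^ ((k + 1).natAbs ^ 2) *
        expand 2 two_ne_zero (qBinom (2 * N) (N + (k + 1))) : R⟦X⟧) := by
    simp only [← pow_add]
    refine X_pow_mul_expand_qBinom_congr fun h _ => ?_
    zify
    rw [Int.toNat_of_nonneg (by omega), sq_abs, sq_abs]
    ring
  have h2 : X ^ (k.natAbs ^ 2) * X ^ (2 * (N + 1 - k).toNat) *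
      expand 2 two_ne_zero (qBinom (2 * N) (N + (k - 1)))
      = (X ^ (2 * N + 1) * X ^ ((k - 1).natAbs ^ 2) *
        expand 2 two_ne_zero (qBinom (2 * N) (N + (k - 1))) : R⟦X⟧) := by
    simp only [← pow_add]
    refine X_pow_mul_expand_qBinom_congr fun _ h => ?_
    zify
    rw [Int.toNat_of_nonneg (by omega), sq_abs, sq_abs]
    ring
  have hB := congrArg (expand 2 two_ne_zero) (qBinom_add_two (R := R) (2 * N) (N + 1 + k))
  rw [show (N : ℤ) + 1 + k - 1 = N + k by ring, show (N : ℤ) + 1 + k - 2 = N + (k - 1) by ring,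
    show ((2 * N : ℕ) : ℤ) + 2 - (N + 1 + k) = N + 1 - k by push_cast; ring,
    show (N : ℤ) + 1 + k = N + (k + 1) by ring] at hB
  simp only [map_add, map_mul, map_pow, map_one, expand_X, ← pow_mul] at hB
  rw [jacobiTerm, jacobiTerm, jacobiTerm, jacobiTerm, show 2 * (N + 1) = 2 * N + 2 by ring,
    show ((N + 1 : ℕ) : ℤ) + k = N + (k + 1) by push_cast; ring, hB,
    Int.negOnePow_succ, Int.negOnePow_sub, Int.negOnePow_one]
  simp only [Units.val_neg, Int.cast_neg, mul_neg, mul_one]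
  linear_combination (k.negOnePow : R⟦X⟧) * (h1 + h2)

lemma sum_Icc_comp_add_eq {M : Type*} [AddCommMonoid M] {f : ℤ → M} {N : ℕ}
    (hf : ∀ k ∉ Icc (-N : ℤ) N, f k = 0) {e : ℤ} (he : |e| ≤ 1) :
    ∑ k ∈ Icc (-(N + 1) : ℤ) (N + 1), f (k + e) = ∑ k ∈ Icc (-N : ℤ) N, f k := by
  rw [show ∑ k ∈ Icc (-(N + 1) : ℤ) (N + 1), f (k + e)
      = ∑ k ∈ Icc (-(N + 1) + e) (N + 1 + e), f k by rw [← map_add_right_Icc, sum_map]; rfl]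
  refine (sum_subset (fun k hk => ?_) fun k _ hk => hf k hk).symm
  rw [mem_Icc] at hk ⊢
  constructor <;> linarith [abs_le.mp he]

lemma oddPoch_sq_eq_sum_jacobiTerm (N : ℕ) :
    oddPoch N ^ 2 = ∑ k ∈ Icc (-N : ℤ) N, (jacobiTerm N k : R⟦X⟧) := by
  induction N with
  | zero => simp [oddPoch, jacobiTerm, qBinom]
  | succ N ih =>
    have hf : ∀ k ∉ Icc (-N : ℤ) N, jacobiTerm N k = (0 : R⟦X⟧) :=
      fun _ => jacobiTerm_of_notMem
    have h0 := sum_Icc_comp_add_eq hf (e := 0) (by simp)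
    have h1 := sum_Icc_comp_add_eq hf (e := 1) (by simp)
    have h2 := sum_Icc_comp_add_eq hf (e := -1) (by simp)
    simp only [add_zero, ← sub_eq_add_neg] at h0 h2
    rw [oddPoch, prod_range_succ, ← oddPoch, mul_pow, ih, Nat.cast_add, Nat.cast_one]
    simp only [jacobiTerm_succ, sum_sub_distrib, ← mul_sum, sum_add_distrib, h0, h1, h2]
    ring

def thetaPartial (N : ℕ) : R⟦X⟧ :=
  ∑ k ∈ Icc (-N : ℤ) N, (k.negOnePow : R⟦X⟧) * X ^ (k.natAbs ^ 2)

lemma X_pow_dvd_qBinom_mul_qPoch_sq_sub {N : ℕ} {k : ℤ} (hk : k.natAbs ≤ N) :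
    (X : R⟦X⟧) ^ (N - k.natAbs + 1) ∣ qBinom (2 * N) (N + k) * qPoch N ^ 2 - qPoch (2 * N) := by
  obtain ⟨i, hi⟩ : ∃ i : ℕ, (i : ℤ) = N + k := ⟨(N + k).toNat, by omega⟩
  have hprod := qBinom_mul_qPoch_mul_qPoch (R := R) (show i ≤ 2 * N by omega)
  rw [hi] at hprod
  have hA := X_pow_dvd_qPoch_sub_qPoch (R := R) (a := N - k.natAbs) (m := N) (n := i)
    (by omega) (by omega)
  have hB := X_pow_dvd_qPoch_sub_qPoch (R := R) (a := N - k.natAbs) (m := N) (n := 2 * N - i)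
    (by omega) (by omega)
  rw [← hprod, show qBinom (2 * N) (N + k) * qPoch N ^ 2
      - qBinom (2 * N) (N + k) * (qPoch i * qPoch (2 * N - i))
      = qBinom (2 * N) (N + k) * (qPoch N * (qPoch N - qPoch (2 * N - i))
        + qPoch (2 * N - i) * (qPoch N - qPoch i)) by ring]
  exact dvd_mul_of_dvd_right (dvd_add (hB.mul_left _) (hA.mul_left _)) _

-- Gauss's identity `(q;q)_∞² = φ(-q) (q²;q²)_∞`, modulo `q^{2N+1}`.
lemma X_pow_dvd_qPoch_sq_sub_thetaPartial_mul (N : ℕ) :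
    (X : R⟦X⟧) ^ (2 * N + 1) ∣
      qPoch (2 * N) ^ 2 - thetaPartial N * expand 2 two_ne_zero (qPoch (2 * N)) := by
  nth_rw 1 [qPoch_two_mul]
  rw [mul_pow, oddPoch_sq_eq_sum_jacobiTerm, thetaPartial, sum_mul, sum_mul,
    ← sum_sub_distrib]
  refine dvd_sum fun k hk => ?_
  rw [mem_Icc] at hk
  have hdvd := map_dvd (expand 2 two_ne_zero)
    (X_pow_dvd_qBinom_mul_qPoch_sq_sub (R := R) (N := N) (k := k) (by omega))
  rw [map_pow, expand_X, ← pow_mul, map_sub, map_mul, map_pow] at hdvd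
  have hexp : 2 * N + 1 ≤ k.natAbs ^ 2 + 2 * (N - k.natAbs + 1) := by
    zify [show k.natAbs ≤ N by omega]
    nlinarith [sq_nonneg ((k.natAbs : ℤ) - 1)]
  rw [jacobiTerm, show (k.negOnePow : R⟦X⟧) * X ^ (k.natAbs ^ 2)
      * expand 2 two_ne_zero (qBinom (2 * N) (N + k)) * expand 2 two_ne_zero (qPoch N) ^ 2
      - (k.negOnePow : R⟦X⟧) * X ^ (k.natAbs ^ 2) * expand 2 two_ne_zero (qPoch (2 * N))
      = (k.negOnePow : R⟦X⟧) * (X ^ (k.natAbs ^ 2)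
        * (expand 2 two_ne_zero (qBinom (2 * N) (N + k)) * expand 2 two_ne_zero (qPoch N) ^ 2
          - expand 2 two_ne_zero (qPoch (2 * N)))) by ring]
  refine dvd_mul_of_dvd_right ((pow_dvd_pow X hexp).trans ?_) _
  rw [pow_add]
  exact mul_dvd_mul_left _ hdvd

lemma coeff_thetaPartial_of_ne_sq {N n : ℕ} (hn : ∀ k : ℕ, k ^ 2 ≠ n) :
    coeff n (thetaPartial N : R⟦X⟧) = 0 := by
  rw [thetaPartial, map_sum]
  refine sum_eq_zero fun k _ => ?_
  rw [← map_intCast (C (R := R)), coeff_C_mul_X_pow, if_neg (hn _).symm]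

lemma coeff_mul_expand_eq_zero {p : ℕ} (hp : p ≠ 0) {r : ℕ} {φ : R⟦X⟧}
    (hφ : ∀ i, i ≡ r [MOD p] → coeff i φ = 0) (ψ : R⟦X⟧) (n : ℕ) :
    coeff (p * n + r) (φ * expand p hp ψ) = 0 := by
  rw [coeff_mul]
  refine sum_eq_zero fun ⟨i, j⟩ hij => ?_
  rw [HasAntidiagonal.mem_antidiagonal] at hij
  by_cases hj : p ∣ j
  · obtain ⟨t, rfl⟩ := hj
    rw [hφ i ?_, zero_mul]
    rw [Nat.ModEq, ← Nat.add_mul_mod_self_left i p t, hij, Nat.mul_add_mod_self_left]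
  · rw [coeff_expand_of_not_dvd p hp ψ hj, mul_zero]

lemma pow_prime_eq_expand {p : ℕ} [Fact p.Prime] (f : (ZMod p)⟦X⟧) :
    f ^ p = expand p (NeZero.ne p) f := by
  have := MvPowerSeries.map_frobenius_expand (R := ZMod p) p (NeZero.ne p) (f := f)
  rw [ZMod.frobenius_zmod] at this
  exact this.symm

lemma coeff_thetaPartial_mul_expand_three (N : ℕ) (ψ : R⟦X⟧) (n : ℕ) :
    coeff (3 * n + 2) (thetaPartial N * expand 3 three_ne_zero ψ) = 0 := by
  refine coeff_mul_expand_eq_zero three_ne_zero (fun i hi => ?_) ψ n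
  refine coeff_thetaPartial_of_ne_sq fun k hk => ?_
  have h := (ZMod.natCast_eq_natCast_iff _ _ _).mpr hi
  rw [← hk, Nat.cast_pow] at h
  generalize (k : ZMod 3) = x at h
  revert x
  decide

def chanProd (N : ℕ) : R⟦X⟧ := ∏ m ∈ Icc 1 N, ((1 - X ^ m) * (1 - X ^ (2 * m)))

lemma chanProd_eq (N : ℕ) :
    chanProd N = (qPoch N * expand 2 two_ne_zero (qPoch N) : R⟦X⟧) := by
  rw [chanProd, ← Ico_add_one_right_eq_Icc, prod_Ico_eq_prod_range, qPoch, map_prod,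
    ← prod_mul_distrib]
  refine prod_congr rfl fun i _ => ?_
  rw [map_sub, map_one, map_pow, expand_X, ← pow_mul, add_comm 1 i, mul_comm 2]

lemma X_pow_dvd_chanProd_sub {n m : ℕ} (h : n ≤ m) :
    (X : R⟦X⟧) ^ (n + 1) ∣ chanProd m - chanProd n := by
  have hP := X_pow_dvd_qPoch_sub (R := R) h
  have hE := (pow_dvd_pow X (by omega : n + 1 ≤ 2 * (n + 1))).trans
    (by simpa [← pow_mul] using map_dvd (expand 2 two_ne_zero) hP)
  rw [chanProd_eq, chanProd_eq, show qPoch m * expand 2 two_ne_zero (qPoch m)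
      - qPoch n * expand 2 two_ne_zero (qPoch n)
      = qPoch m * (expand 2 two_ne_zero (qPoch m) - expand 2 two_ne_zero (qPoch n))
        + (qPoch m - qPoch n) * expand 2 two_ne_zero (qPoch n) by ring]
  exact dvd_add (hE.mul_left _) (hP.mul_right _)

lemma X_pow_dvd_mul_sub_one_of_coeff {F : ℕ → R⟦X⟧}
    (hF : ∀ {n m : ℕ}, n ≤ m → X ^ (n + 1) ∣ F m - F n) {f : R⟦X⟧}
    (hf : ∀ n, coeff n (f * F n) = if n = 0 then 1 else 0) (N : ℕ) :
    X ^ (N + 1) ∣ f * F N - 1 := by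
  refine X_pow_dvd_iff.mpr fun j hj => ?_
  have hstable := X_pow_dvd_iff.mp ((hF (show j ≤ N by omega)).mul_left f) j (by omega)
  rw [mul_sub, map_sub, sub_eq_zero] at hstable
  rw [map_sub, hstable, hf, coeff_one, sub_self]

lemma coeff_three_mul_add_two_eq_zero {f : (ZMod 3)⟦X⟧}
    (hf : ∀ N, X ^ (N + 1) ∣ f * chanProd N - 1) (n : ℕ) : coeff (3 * n + 2) f = 0 := by
  set N := 2 * (3 * n + 2)
  set P : (ZMod 3)⟦X⟧ := qPoch N
  set E : (ZMod 3)⟦X⟧ := expand 2 two_ne_zero (qPoch N)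
  set θ : (ZMod 3)⟦X⟧ := thetaPartial (3 * n + 2)
  obtain ⟨G, hG⟩ : ∃ G, P * E * G = 1 :=
    ((isUnit_qPoch N).mul ((isUnit_qPoch N).map _)).exists_right_inv
  set π := Ideal.Quotient.mk (Ideal.span {(X : (ZMod 3)⟦X⟧) ^ (3 * n + 3)})
  have hπ {A B : (ZMod 3)⟦X⟧} {d : ℕ} (hd : 3 * n + 3 ≤ d) (h : X ^ d ∣ A - B) : π A = π B :=
    Ideal.Quotient.eq.mpr (Ideal.mem_span_singleton.mpr ((pow_dvd_pow X hd).trans h))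
  have hunit : π f * (π P * π E) = 1 := by
    simpa [chanProd_eq] using hπ (by omega) (hf N)
  have hgauss : π P ^ 2 = π θ * π E := by
    simpa using hπ (by omega) (X_pow_dvd_qPoch_sq_sub_thetaPartial_mul (3 * n + 2))
  have hcube : (π P * π E) ^ 3 * π (expand 3 three_ne_zero G) = 1 := by
    rw [← map_mul, ← map_pow, ← map_mul, pow_prime_eq_expand, ← map_mul, hG, map_one, map_one]
  -- `f = (f F) · F² · G(q³)` and `F² = P² E² ≡ θ E³`, where `F = P E` and `F³ · G(q³) = 1`.
  have key : π f = π (θ * E ^ 3 * expand 3 three_ne_zero G) := by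
    simp only [map_mul, map_pow]
    linear_combination (-π f) * hcube + (π P * π E) ^ 2 * π (expand 3 three_ne_zero G) * hunit
      + π E ^ 2 * π (expand 3 three_ne_zero G) * hgauss
  have hcoeff := X_pow_dvd_iff.mp (Ideal.mem_span_singleton.mp (Ideal.Quotient.eq.mp key))
    (3 * n + 2) (by omega)
  rw [map_sub, sub_eq_zero] at hcoeff
  rw [hcoeff, pow_prime_eq_expand, mul_assoc, ← map_mul]
  exact coeff_thetaPartial_mul_expand_three _ _ n

end PowerSeries

end

open PowerSeries

/-- With `c₂(n)` defined by
`∑ c₂(n) qⁿ = ∏_{n≥1} 1/((1 - qⁿ)(1 - q^{2n}))` in `ℤ[[q]]`, we have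
`c₂(3n + 2) ≡ 0 (mod 3)` for all `n ≥ 0`. -/
theorem chan_congruence_mod_three
    (c : ℕ → ℤ)
    (hc : ∀ n : ℕ, PowerSeries.coeff (R := ℤ) n ((PowerSeries.mk c) *
        ∏ m ∈ Finset.Icc 1 n, ((1 - PowerSeries.X ^ m) * (1 - PowerSeries.X ^ (2 * m)))) =
      if n = 0 then 1 else 0) :
    ∀ n : ℕ, (3 : ℤ) ∣ c (3 * n + 2) := by
  intro n
  have hdvd (N : ℕ) : X ^ (N + 1) ∣ map (Int.castRingHom (ZMod 3)) (mk c) * chanProd N - 1 := by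
    simpa [chanProd, map_prod] using map_dvd (map (Int.castRingHom (ZMod 3)))
      (X_pow_dvd_mul_sub_one_of_coeff X_pow_dvd_chanProd_sub hc N)
  have h := coeff_three_mul_add_two_eq_zero hdvd n
  rw [coeff_map, coeff_mk] at h
  exact (ZMod.intCast_zmod_eq_zero_iff_dvd _ 3).mp h
end

section
/- Let N > 1 be an integer with N ≡ 0 (mod 7). Then c_N(7n + 5) ≡ 0 (mod 7) for all integers n ≥ 0. -/
/-!
Reduce modulo 7 and put `F = ∑ c_N(n) qⁿ`, so that `F · (q;q)_∞ (q^N;q^N)_∞ = 1`. Multiplying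
by `(q;q)_∞⁶` and using `(q;q)_∞⁷ = (q⁷;q⁷)_∞` in characteristic 7 gives
`F · (q⁷;q⁷)_∞ (q^N;q^N)_∞ = (q;q)_∞⁶ = J²`, where `J = ∑ (-1)ⁱ (2i+1) q^{i(i+1)/2}` by Jacobi's
identity. Since `7 ∣ N`, the product on the left is an invertible series in `q⁷`, so `F`
vanishes on the progression `7n + 5` because `J²` does: a term `q^{i(i+1)/2 + j(j+1)/2}` of `J²`
whose exponent is `5 mod 7` has `(2i+1)² + (2j+1)² ≡ 0 (mod 7)`, and as `-1` is not a square
modulo 7 this forces `7 ∣ 2i+1`.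

Jacobi's identity comes from the finite triple product
`∏_{j=1}^{a} (q^j + z) ∏_{j=0}^{b-1} (1 + q^j z) = ∑_c [a+b, c]_q q^{k(k-1)/2} z^c`
(`k = c - a`), differentiated at `z = -1`. All products are truncated, and the identities hold
modulo `q^{K+1}`.
-/

open Finset

section QAnalogues

variable {R : Type*} [CommRing R] (q : R)

def qPochhammer (n : ℕ) : R := ∏ j ∈ range n, (1 - q ^ (j + 1))

lemma qPochhammer_succ (n : ℕ) :
    qPochhammer q (n + 1) = qPochhammer q n * (1 - q ^ (n + 1)) :=
  prod_range_succ _ n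

lemma SModEq.mul_left_pow {x y : R} {s : ℕ} (h : x ≡ y [SMOD Ideal.span {q ^ s}]) (r : ℕ) :
    q ^ r * x ≡ q ^ r * y [SMOD Ideal.span {q ^ (r + s)}] := by
  rw [SModEq.sub_mem, Ideal.mem_span_singleton] at h ⊢
  rw [← mul_sub, pow_add]
  exact mul_dvd_mul_left _ h

lemma prod_one_sub_pow_smodEq_one {ι : Type*} (s : Finset ι) (e : ι → ℕ) {t : ℕ}
    (h : ∀ j ∈ s, t ≤ e j) : ∏ j ∈ s, (1 - q ^ e j) ≡ 1 [SMOD Ideal.span {q ^ t}] := by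
  have hfactor : ∀ j ∈ s, 1 - q ^ e j ≡ 1 [SMOD Ideal.span {q ^ t}] := fun j hj => by
    rw [SModEq.sub_mem, Ideal.mem_span_singleton, sub_sub_cancel_left, dvd_neg]
    exact pow_dvd_pow q (h j hj)
  simpa using SModEq.prod hfactor

lemma qPochhammer_add_smodEq (n k : ℕ) :
    qPochhammer q (n + k) ≡ qPochhammer q n [SMOD Ideal.span {q ^ (n + 1)}] := by
  rw [qPochhammer, prod_range_add, ← qPochhammer]
  simpa using (SModEq.refl (qPochhammer q n)).mul
    (prod_one_sub_pow_smodEq_one q (range k) (fun j => n + j + 1) fun j _ => by omega)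

def qBinomial : ℕ → ℕ → R
  | _, 0 => 1
  | 0, _ + 1 => 0
  | n + 1, c + 1 => qBinomial n (c + 1) + q ^ (n - c) * qBinomial n c

@[simp]
lemma qBinomial_zero_right (n : ℕ) : qBinomial q n 0 = 1 := by
  cases n <;> rfl

lemma qBinomial_succ_succ (n c : ℕ) :
    qBinomial q (n + 1) (c + 1) = qBinomial q n (c + 1) + q ^ (n - c) * qBinomial q n c :=
  rfl

lemma qBinomial_eq_zero_of_lt {n c : ℕ} (h : n < c) : qBinomial q n c = 0 := by
  induction n generalizing c with
  | zero => obtain ⟨c, rfl⟩ := Nat.exists_eq_add_one_of_ne_zero h.ne'; rfl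
  | succ n ih =>
    obtain ⟨c, rfl⟩ := Nat.exists_eq_add_one_of_ne_zero (Nat.ne_zero_of_lt h)
    rw [qBinomial_succ_succ, ih (by omega), ih (by omega), mul_zero, add_zero]

lemma one_sub_pow_mul_qBinomial_succ (n c : ℕ) :
    (1 - q ^ (c + 1)) * qBinomial q n (c + 1) = (1 - q ^ (n - c)) * qBinomial q n c := by
  induction n generalizing c with
  | zero => simp [qBinomial_eq_zero_of_lt q (Nat.succ_pos c)]
  | succ n ih =>
    rcases lt_or_ge n c with hnc | hcn
    · rw [qBinomial_eq_zero_of_lt q (by omega : n + 1 < c + 1)]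
      rcases (Nat.succ_le_of_lt hnc).eq_or_lt with rfl | hc
      · simp
      · rw [qBinomial_eq_zero_of_lt q hc, mul_zero, mul_zero]
    rw [qBinomial_succ_succ]
    cases c with
    | zero =>
      simp only [qBinomial_zero_right, Nat.sub_zero, zero_add, pow_one]
      linear_combination ih 0 + pow_succ q n + (1 - q ^ n) * qBinomial_zero_right q n
    | succ c =>
      have hpow : q ^ (n - c) * q ^ (c + 1) = q ^ (n + 1) := by
        rw [← pow_add]; congr 1; omega
      have hpow' : q ^ (n - (c + 1)) * q ^ (c + 1 + 1) = q ^ (n + 1) := by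
        rw [← pow_add]; congr 1; omega
      rw [qBinomial_succ_succ, show n + 1 - (c + 1) = n - c by omega]
      linear_combination ih (c + 1) + q ^ (n - c) * ih c
        + qBinomial q n (c + 1) * (hpow - hpow')

lemma qBinomial_succ_succ' (n c : ℕ) :
    qBinomial q (n + 1) (c + 1) = q ^ (c + 1) * qBinomial q n (c + 1) + qBinomial q n c := by
  linear_combination qBinomial_succ_succ q n c + one_sub_pow_mul_qBinomial_succ q n c

lemma qPochhammer_mul_qBinomial (M c : ℕ) :
    qPochhammer q c * qBinomial q M c = ∏ j ∈ range c, (1 - q ^ (M - j)) := by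
  induction c with
  | zero => simp [qPochhammer]
  | succ c ih =>
    rw [qPochhammer_succ, mul_assoc, one_sub_pow_mul_qBinomial_succ, mul_left_comm, ih,
      prod_range_succ, mul_comm]

lemma qPochhammer_mul_qBinomial_smodEq_one {M c t : ℕ} (hc : c ≤ M) (ht : t ≤ c + 1)
    (ht' : t ≤ M - c + 1) :
    qPochhammer q M * qBinomial q M c ≡ 1 [SMOD Ideal.span {q ^ t}] := by
  have hsplit : qPochhammer q M =
      qPochhammer q c * ∏ j ∈ range (M - c), (1 - q ^ (c + j + 1)) := by
    rw [qPochhammer, qPochhammer, ← prod_range_add, Nat.add_sub_cancel' hc]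
  rw [hsplit, mul_right_comm, qPochhammer_mul_qBinomial]
  simpa using (prod_one_sub_pow_smodEq_one q (range c) (fun j => M - j) (t := t)
    fun j hj => by simp only [mem_range] at hj; omega).mul
    (prod_one_sub_pow_smodEq_one q (range (M - c)) (fun j => c + j + 1) (t := t)
      fun j _ => by omega)

end QAnalogues

def tripleExponent (a c : ℕ) : ℕ := ((c - a : ℤ) * (c - a - 1) / 2).toNat

lemma two_mul_tripleExponent (a c : ℕ) :
    (2 * tripleExponent a c : ℤ) = (c - a) * (c - a - 1) := by
  have hnonneg : 0 ≤ ((c - a : ℤ) * (c - a - 1)) := by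
    rcases le_or_gt (c : ℤ) a with h | h
    · exact mul_nonneg_of_nonpos_of_nonpos (by omega) (by omega)
    · exact mul_nonneg (by omega) (by omega)
  rw [tripleExponent, Int.toNat_of_nonneg (Int.ediv_nonneg hnonneg two_pos.le),
    Int.mul_ediv_cancel' (Int.even_mul_pred_self _).two_dvd]

lemma tripleExponent_succ_succ (a c : ℕ) :
    tripleExponent (a + 1) (c + 1) = tripleExponent a c := by
  simp only [tripleExponent]
  push_cast
  ring_nf

lemma add_tripleExponent_succ (a c : ℕ) :
    a + tripleExponent a (c + 1) = c + tripleExponent a c := by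
  have h := two_mul_tripleExponent a c
  have hsucc := two_mul_tripleExponent a (c + 1)
  push_cast at hsucc
  linarith

lemma tripleExponent_self_sub (i n : ℕ) (h : i ≤ n) :
    tripleExponent n (n - i) = i * (i + 1) / 2 := by
  have h2 := two_mul_tripleExponent n (n - i)
  push_cast [h] at h2
  have : 2 * tripleExponent n (n - i) = i * (i + 1) := by zify; linarith
  omega

lemma tripleExponent_self_add (i n : ℕ) : tripleExponent n (n + 1 + i) = i * (i + 1) / 2 := by
  have h2 := two_mul_tripleExponent n (n + 1 + i)
  push_cast at h2
  have : 2 * tripleExponent n (n + 1 + i) = i * (i + 1) := by zify; linarith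
  omega

section TripleProduct

open Polynomial

variable {R : Type*} [CommRing R] (q : R)

noncomputable def finiteTripleProduct (a b : ℕ) : R[X] :=
  (∏ j ∈ range a, (C (q ^ (j + 1)) + X)) * ∏ j ∈ range b, (1 + C (q ^ j) * X)

lemma coeff_finiteTripleProduct_zero_right (a c : ℕ) :
    (finiteTripleProduct q a 0).coeff c = qBinomial q a c * q ^ tripleExponent a c := by
  induction a generalizing c with
  | zero => cases c <;> simp [finiteTripleProduct, coeff_one, tripleExponent, qBinomial]
  | succ a ih =>
    have hstep : finiteTripleProduct q (a + 1) 0 =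
        finiteTripleProduct q a 0 * (C (q ^ (a + 1)) + X) := by
      simp only [finiteTripleProduct, prod_range_succ, prod_range_zero, mul_one]
    cases c with
    | zero =>
      have hpow : q ^ (a + 1) * q ^ tripleExponent a 0 = q ^ tripleExponent (a + 1) 0 := by
        rw [← pow_add, ← tripleExponent_succ_succ, add_tripleExponent_succ, zero_add]
      simp only [hstep, mul_add, coeff_add, coeff_mul_C, coeff_mul_X_zero, ih,
        qBinomial_zero_right, add_zero, one_mul]
      linear_combination hpow
    | succ c =>
      have hpow : q ^ (a + 1) * q ^ tripleExponent a (c + 1) =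
          q ^ (c + 1) * q ^ tripleExponent a c := by
        rw [← pow_add, ← pow_add]; congr 1; have := add_tripleExponent_succ a c; omega
      simp only [hstep, mul_add, coeff_add, coeff_mul_C, coeff_mul_X, ih, qBinomial_succ_succ',
        tripleExponent_succ_succ]
      linear_combination qBinomial q a (c + 1) * hpow

theorem coeff_finiteTripleProduct (a b c : ℕ) :
    (finiteTripleProduct q a b).coeff c = qBinomial q (a + b) c * q ^ tripleExponent a c := by
  induction b generalizing c with
  | zero => exact coeff_finiteTripleProduct_zero_right q a c
  | succ b ih =>
    have hstep : finiteTripleProduct q a (b + 1) =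
        finiteTripleProduct q a b * (1 + C (q ^ b) * X) := by
      simp only [finiteTripleProduct, prod_range_succ, mul_assoc]
    cases c with
    | zero => simp [hstep, ← add_assoc, ih]
    | succ c =>
      simp only [hstep, mul_add, mul_one, coeff_add, ← mul_assoc, coeff_mul_X, coeff_mul_C, ih,
        ← add_assoc, qBinomial_succ_succ]
      rcases le_or_gt c (a + b) with hc | hc
      · have hpow : q ^ tripleExponent a c * q ^ b =
            q ^ (a + b - c) * q ^ tripleExponent a (c + 1) := by
          rw [← pow_add, ← pow_add]; congr 1; have := add_tripleExponent_succ a c; omega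
        linear_combination qBinomial q (a + b) c * hpow
      · simp [qBinomial_eq_zero_of_lt q hc]

lemma natDegree_finiteTripleProduct_le (a b : ℕ) :
    (finiteTripleProduct q a b).natDegree ≤ a + b :=
  natDegree_le_iff_coeff_eq_zero.2 fun c hc => by
    rw [coeff_finiteTripleProduct, qBinomial_eq_zero_of_lt q (by exact_mod_cast hc), zero_mul]

lemma finiteTripleProduct_succ_succ (n : ℕ) :
    finiteTripleProduct q (n + 1) (n + 1) =
      (∏ j ∈ range (n + 1), (C (q ^ (j + 1)) + X)) *
        (∏ j ∈ range n, (1 + C (q ^ (j + 1)) * X)) * (1 + X) := by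
  rw [finiteTripleProduct, prod_range_succ' (fun j => 1 + C (q ^ j) * X)]
  simp only [pow_zero, C_1, one_mul]
  ring

lemma eval_neg_one_derivative_mul_one_add_X (p : R[X]) :
    (derivative (p * (1 + X))).eval (-1) = p.eval (-1) := by
  simp [derivative_mul]

theorem qPochhammer_mul_qPochhammer_eq_sum (n : ℕ) :
    (-1) ^ (n + 1) * (qPochhammer q (n + 1) * qPochhammer q n) =
      ∑ c ∈ range (2 * n + 2), qBinomial q (2 * n + 2) (c + 1) *
        q ^ tripleExponent (n + 1) (c + 1) * (c + 1) * (-1) ^ c := by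
  have heval : ((∏ j ∈ range (n + 1), (C (q ^ (j + 1)) + X)) *
      (∏ j ∈ range n, (1 + C (q ^ (j + 1)) * X))).eval (-1) =
      (-1) ^ (n + 1) * (qPochhammer q (n + 1) * qPochhammer q n) := by
    simp only [eval_mul, eval_prod, eval_add, eval_C, eval_X, eval_one, qPochhammer]
    rw [show ((-1 : R)) ^ (n + 1) = ∏ _j ∈ range (n + 1), (-1) by simp, ← mul_assoc,
      ← prod_mul_distrib]
    congr 1 <;> exact prod_congr rfl fun j _ => by ring
  have hdeg : (derivative (finiteTripleProduct q (n + 1) (n + 1))).natDegree < 2 * n + 2 := by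
    have := natDegree_derivative_le (finiteTripleProduct q (n + 1) (n + 1))
    have := natDegree_finiteTripleProduct_le q (n + 1) (n + 1)
    omega
  rw [← heval, ← eval_neg_one_derivative_mul_one_add_X, ← finiteTripleProduct_succ_succ,
    eval_eq_sum_range' hdeg]
  refine sum_congr rfl fun c _ => ?_
  rw [coeff_derivative, coeff_finiteTripleProduct, show n + 1 + (n + 1) = 2 * n + 2 by ring]

theorem qPochhammer_mul_qPochhammer_eq_sum_pairs (n : ℕ) :
    qPochhammer q (n + 1) * qPochhammer q n =
      ∑ i ∈ range (n + 1), (-1) ^ i * q ^ (i * (i + 1) / 2) *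
        ((n + 2 + i : ℕ) * qBinomial q (2 * n + 2) (n + 2 + i) -
          (n + 1 - i : ℕ) * qBinomial q (2 * n + 2) (n + 1 - i)) := by
  have hsum := qPochhammer_mul_qPochhammer_eq_sum q n
  have hM : 2 * n + 2 = (n + 1) + (n + 1) := by ring
  rw [hM, sum_range_add, ← sum_range_reflect, ← sum_add_distrib] at hsum
  rw [hM]
  refine (isUnit_neg_one.pow (n + 1)).mul_left_cancel (hsum.trans ?_)
  rw [mul_sum]
  refine sum_congr rfl fun i hi => ?_
  have hi : i ≤ n := mem_range_succ_iff.1 hi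
  have hsign : (-1 : R) ^ (n - i) = (-1) ^ n * (-1) ^ i := by
    rw [← pow_add, show n + i = (n - i) + 2 * i by omega, pow_add, pow_mul, neg_one_sq, one_pow,
      mul_one]
  rw [show n + 1 - 1 - i + 1 = n + 1 - i by omega, show n + 1 + i + 1 = n + 1 + 1 + i by ring,
    tripleExponent_self_sub i (n + 1) (by omega), tripleExponent_self_add i (n + 1),
    pow_add _ (n + 1) i, show n + 1 + 1 + i = n + 2 + i by ring]
  push_cast [show n + 1 - 1 - i = n - i by omega, hi, Nat.le_succ_of_le hi, hsign]
  ring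

end TripleProduct

section JacobiCube

variable {R : Type*} [CommRing R] (q : R)

def jacobiCubeSum (n : ℕ) : R := ∑ i ∈ range n, (-1) ^ i * (2 * i + 1) * q ^ (i * (i + 1) / 2)

lemma le_mul_succ_div_two (i : ℕ) : i ≤ i * (i + 1) / 2 := by
  rw [Nat.le_div_iff_mul_le two_pos]
  rcases Nat.eq_zero_or_pos i with rfl | hi
  · rfl
  · exact Nat.mul_le_mul_left i (by omega)

theorem qPochhammer_pow_three_smodEq (n : ℕ) :
    qPochhammer q n ^ 3 ≡ jacobiCubeSum q (n + 1) [SMOD Ideal.span {q ^ (n + 1)}] := by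
  have hcube : qPochhammer q n ^ 3 ≡
      qPochhammer q (2 * n + 2) * (qPochhammer q (n + 1) * qPochhammer q n)
      [SMOD Ideal.span {q ^ (n + 1)}] := by
    rw [show qPochhammer q n ^ 3 = qPochhammer q n * (qPochhammer q n * qPochhammer q n) by ring,
      show 2 * n + 2 = n + (n + 2) by ring]
    exact (qPochhammer_add_smodEq q n _).symm.mul ((qPochhammer_add_smodEq q n 1).symm.mul .rfl)
  refine hcube.trans ?_
  rw [qPochhammer_mul_qPochhammer_eq_sum_pairs, mul_sum, jacobiCubeSum]
  refine SModEq.sum fun i hi => ?_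
  have hi : i ≤ n := mem_range_succ_iff.1 hi
  have hB := qPochhammer_mul_qBinomial_smodEq_one q (M := 2 * n + 2) (c := n + 2 + i)
    (t := n + 1 - i) (by omega) (by omega) (by omega)
  have hB' := qPochhammer_mul_qBinomial_smodEq_one q (M := 2 * n + 2) (c := n + 1 - i)
    (t := n + 1 - i) (by omega) (by omega) (by omega)
  have hterm := (((SModEq.refl ((n + 2 + i : ℕ) : R)).mul hB).sub
    ((SModEq.refl ((n + 1 - i : ℕ) : R)).mul hB')).mul_left_pow q (i * (i + 1) / 2)
  have hle : Ideal.span {q ^ (i * (i + 1) / 2 + (n + 1 - i))} ≤ Ideal.span {q ^ (n + 1)} :=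
    Ideal.span_singleton_le_span_singleton.2
      (pow_dvd_pow q (by have := le_mul_succ_div_two i; omega))
  convert (SModEq.refl ((-1 : R) ^ i)).mul (hterm.mono hle) using 1
  · ring
  · push_cast [hi, Nat.le_succ_of_le hi]
    ring

end JacobiCube

section PowerSeries

open PowerSeries

variable {R : Type*} [CommRing R]

lemma qPochhammer_eq_prod_Icc (q : R) (n : ℕ) :
    qPochhammer q n = ∏ m ∈ Icc 1 n, (1 - q ^ m) := by
  rw [qPochhammer, ← Ico_add_one_right_eq_Icc, prod_Ico_eq_prod_range, Nat.add_sub_cancel]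
  simp only [add_comm 1]

lemma map_qPochhammer {S F : Type*} [CommRing S] [FunLike F R S] [RingHomClass F R S] (f : F)
    (q : R) (n : ℕ) : f (qPochhammer q n) = qPochhammer (f q) n := by
  simp [qPochhammer, map_prod]

lemma constantCoeff_qPochhammer {q : R⟦X⟧} (hq : constantCoeff q = 0) (n : ℕ) :
    constantCoeff (qPochhammer q n) = 1 := by
  simp [qPochhammer, map_prod, hq]

lemma coeff_eq_of_smodEq {f g : R⟦X⟧} {n t : ℕ} (h : f ≡ g [SMOD Ideal.span {X ^ t}])
    (hn : n < t) : coeff n f = coeff n g := by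
  rw [SModEq.sub_mem, Ideal.mem_span_singleton, X_pow_dvd_iff] at h
  exact sub_eq_zero.1 (by simpa using h n hn)

lemma coeff_mul_expand_eq_zero {p : ℕ} (hp : p ≠ 0) {f : R⟦X⟧} {r K : ℕ}
    (hf : ∀ k ≤ K, k % p = r → coeff k f = 0) (g : R⟦X⟧) :
    ∀ k ≤ K, k % p = r → coeff k (f * expand p hp g) = 0 := by
  intro k hk hkr
  rw [coeff_mul]
  refine sum_eq_zero fun ab hab => ?_
  rw [HasAntidiagonal.mem_antidiagonal] at hab
  by_cases hdvd : p ∣ ab.2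
  · obtain ⟨t, ht⟩ := hdvd
    have hr : ab.1 % p = r := by rw [← hkr, ← hab, ht, Nat.add_mul_mod_self_left]
    rw [hf ab.1 (by omega) hr, zero_mul]
  · rw [coeff_expand_of_not_dvd p hp g hdvd, mul_zero]

lemma mul_qPochhammer_smodEq_one {f : R⟦X⟧} {N : ℕ} (hN : 0 < N)
    (hf : ∀ k, coeff k (f * ∏ m ∈ Icc 1 k, ((1 - X ^ m) * (1 - X ^ (N * m)))) =
      if k = 0 then 1 else 0) (K : ℕ) :
    f * (qPochhammer X K * qPochhammer (X ^ N) K) ≡ 1 [SMOD Ideal.span {X ^ (K + 1)}] := by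
  rw [SModEq.sub_mem, Ideal.mem_span_singleton, X_pow_dvd_iff]
  intro k hk
  have hle : Ideal.span {((X : R⟦X⟧) ^ N) ^ (k + 1)} ≤ Ideal.span {X ^ (k + 1)} :=
    Ideal.span_singleton_le_span_singleton.2 (pow_dvd_pow_of_dvd (dvd_pow_self X hN.ne') _)
  have htail : qPochhammer X K * qPochhammer (X ^ N) K ≡ qPochhammer X k * qPochhammer (X ^ N) k
      [SMOD Ideal.span {(X : R⟦X⟧) ^ (k + 1)}] := by
    rw [← Nat.add_sub_cancel' (Nat.lt_succ_iff.1 hk)]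
    exact (qPochhammer_add_smodEq X k _).mul ((qPochhammer_add_smodEq (X ^ N) k _).mono hle)
  rw [map_sub, coeff_eq_of_smodEq ((SModEq.refl f).mul htail) (lt_add_one k),
    qPochhammer_eq_prod_Icc, qPochhammer_eq_prod_Icc, ← prod_mul_distrib]
  simp_rw [← pow_mul]
  rw [hf, coeff_one, sub_self]

end PowerSeries

section ModSeven

open PowerSeries

theorem pow_char_eq_expand (p : ℕ) [Fact p.Prime] (f : (ZMod p)⟦X⟧) :
    f ^ p = expand p (Fact.out : p.Prime).ne_zero f := by
  rw [← MvPowerSeries.map_frobenius_expand p (Fact.out : p.Prime).ne_zero, ZMod.frobenius_zmod,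
    MvPowerSeries.map_id]
  rfl

lemma two_mul_add_one_eq_zero_of_triangle_add_triangle {i j k : ℕ}
    (h : i * (i + 1) / 2 + j * (j + 1) / 2 = k) (hk : k % 7 = 5) :
    (2 * i + 1 : ZMod 7) = 0 := by
  have hi : 2 * (i * (i + 1) / 2) = i * (i + 1) :=
    Nat.mul_div_cancel' (Nat.even_mul_succ_self i).two_dvd
  have hj : 2 * (j * (j + 1) / 2) = j * (j + 1) :=
    Nat.mul_div_cancel' (Nat.even_mul_succ_self j).two_dvd
  have hk7 : (k : ZMod 7) = 5 := by rw [← ZMod.natCast_mod, hk]; rfl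
  have hcast :=
    congrArg (Nat.cast : ℕ → ZMod 7) (show i * (i + 1) + j * (j + 1) = 2 * k by omega)
  push_cast [hk7] at hcast
  generalize (i : ZMod 7) = x at hcast ⊢
  generalize (j : ZMod 7) = y at hcast
  revert x y
  decide

lemma coeff_jacobiCubeSum_sq_eq_zero (n k : ℕ) (hk : k % 7 = 5) :
    coeff k (jacobiCubeSum (X : (ZMod 7)⟦X⟧) n ^ 2) = 0 := by
  rw [jacobiCubeSum, sq, sum_mul_sum, map_sum]
  refine sum_eq_zero fun i _ => ?_
  rw [map_sum]
  refine sum_eq_zero fun j _ => ?_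
  have hterm : (-1 : (ZMod 7)⟦X⟧) ^ i * (2 * (i : (ZMod 7)⟦X⟧) + 1) * X ^ (i * (i + 1) / 2) *
      ((-1) ^ j * (2 * (j : (ZMod 7)⟦X⟧) + 1) * X ^ (j * (j + 1) / 2)) =
      C ((2 * i + 1 : ZMod 7) * ((-1) ^ i * (-1) ^ j * (2 * j + 1))) *
        (X : (ZMod 7)⟦X⟧) ^ (i * (i + 1) / 2 + j * (j + 1) / 2) := by
    simp only [map_mul, map_add, map_pow, map_neg, map_one, map_natCast, map_ofNat, pow_add]
    ring
  rw [hterm, coeff_C_mul_X_pow]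
  split_ifs with h
  · rw [two_mul_add_one_eq_zero_of_triangle_add_triangle h.symm hk, zero_mul]
  · rfl

theorem coeff_eq_zero_of_mul_qPochhammer_smodEq_one {F : (ZMod 7)⟦X⟧} {N K : ℕ} (hN : N ≠ 0)
    (hF : F * (qPochhammer X K * qPochhammer (X ^ (7 * N)) K) ≡ 1
      [SMOD Ideal.span {X ^ (K + 1)}])
    (hK : K % 7 = 5) : coeff K F = 0 := by
  have h7 : (7 : ℕ) ≠ 0 := by norm_num
  have : Fact (Nat.Prime 7) := ⟨by norm_num⟩
  set P := qPochhammer (X : (ZMod 7)⟦X⟧) K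
  set g := P * qPochhammer (X ^ N) K
  have hexpand : expand 7 h7 g = P ^ 7 * qPochhammer (X ^ (7 * N)) K := by
    rw [map_mul, pow_char_eq_expand, map_qPochhammer, map_qPochhammer, map_pow, expand_X,
      ← pow_mul]
  have hJ : F * expand 7 h7 g ≡ jacobiCubeSum X (K + 1) ^ 2
      [SMOD Ideal.span {X ^ (K + 1)}] := by
    rw [hexpand, show F * (P ^ 7 * qPochhammer (X ^ (7 * N)) K) =
      F * (P * qPochhammer (X ^ (7 * N)) K) * (P ^ 3) ^ 2 by ring]
    simpa using hF.mul ((qPochhammer_pow_three_smodEq X K).pow 2)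
  have hcoeff : ∀ k ≤ K, k % 7 = 5 → coeff k (F * expand 7 h7 g) = 0 := fun k hk hk5 =>
    (coeff_eq_of_smodEq hJ (by omega)).trans (coeff_jacobiCubeSum_sq_eq_zero _ k hk5)
  obtain ⟨g', hg'⟩ := (isUnit_iff_constantCoeff.2 (by
    simp [g, P, constantCoeff_qPochhammer, hN] : IsUnit (constantCoeff g))).exists_right_inv
  have hF' : F = F * expand 7 h7 g * expand 7 h7 g' := by
    rw [mul_assoc, ← map_mul, hg', map_one, mul_one]
  rw [hF']
  exact coeff_mul_expand_eq_zero h7 hcoeff g' K le_rfl hK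

end ModSeven

/-- For `N > 1` with `N ≡ 0 (mod 7)`, and `c_N(n)` defined by
`∑ c_N(n) qⁿ = ∏_{n≥1} 1/((1 - qⁿ)(1 - q^{N n}))` in `ℤ[[q]]`, we have
`c_N(7n + 5) ≡ 0 (mod 7)` for all `n ≥ 0`. -/
theorem cN_congruence_mod_seven
    (N : ℕ) (hN : 1 < N) (hN7 : N % 7 = 0) (c : ℕ → ℤ)
    (hc : ∀ n : ℕ, PowerSeries.coeff (R := ℤ) n ((PowerSeries.mk c) *
        ∏ m ∈ Finset.Icc 1 n, ((1 - PowerSeries.X ^ m) * (1 - PowerSeries.X ^ (N * m)))) =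
      if n = 0 then 1 else 0) :
    ∀ n : ℕ, (7 : ℤ) ∣ c (7 * n + 5) := by
  intro n
  obtain ⟨N, rfl⟩ := Nat.dvd_of_mod_eq_zero hN7
  set F := PowerSeries.map (Int.castRingHom (ZMod 7)) (PowerSeries.mk c)
  have hF : ∀ k, PowerSeries.coeff k (F * ∏ m ∈ Icc 1 k,
      ((1 - PowerSeries.X ^ m) * (1 - PowerSeries.X ^ (7 * N * m)))) =
      if k = 0 then 1 else 0 := by
    intro k
    have := congrArg (Int.castRingHom (ZMod 7)) (hc k)
    rw [← PowerSeries.coeff_map, map_mul, map_prod] at this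
    simpa using this
  have hzero := coeff_eq_zero_of_mul_qPochhammer_smodEq_one (N := N) (K := 7 * n + 5) (by omega)
    (mul_qPochhammer_smodEq_one (by omega) hF _) (by omega)
  rwa [PowerSeries.coeff_map, PowerSeries.coeff_mk, eq_intCast, ZMod.intCast_zmod_eq_zero_iff_dvd]
    at hzero
end

section
/- Let N > 1 be an integer and 0 ≤ a ≤ 2. If c_N(3n + a) ≡ 0 (mod 3) for all integers n ≥ 0, then N = 2 and a = 2. -/
/-!
Taking `n = 0` in the congruence suffices. Expanding the truncated products modulo `X ^ 3` gives
`c 0 = c 1 = 1`, and `c 2 = 3` when `N = 2` (the factor `1 - X ^ N` then contributes to the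
coefficient of `X ^ 2`) but `c 2 = 2` when `N ≥ 3`.
-/

open PowerSeries

theorem coeff_mul_one_sub_X_pow {R : Type*} [CommRing R] (f : R⟦X⟧) (k n : ℕ) :
    coeff n (f * (1 - X ^ k)) = coeff n f - if k ≤ n then coeff (n - k) f else 0 := by
  rw [mul_sub, mul_one, map_sub, coeff_mul_X_pow']

section

variable (N : ℕ) (c : ℕ → ℤ)
    (hc : ∀ n : ℕ, coeff n (mk c * ∏ m ∈ Finset.Icc 1 n, ((1 - X ^ m) * (1 - X ^ (N * m)))) =
      if n = 0 then 1 else 0)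
include hc

theorem cN_zero : c 0 = 1 := by
  simpa using hc 0

theorem cN_one (hN : 2 ≤ N) : c 1 = 1 := by
  have h := hc 1
  rw [Finset.Icc_self, Finset.prod_singleton, ← mul_assoc] at h
  simp (disch := omega) only [coeff_mul_one_sub_X_pow, coeff_mk, if_pos, if_neg] at h
  linarith [cN_zero N c hc]

theorem cN_two (hN : 2 ≤ N) : c 2 = if N = 2 then 3 else 2 := by
  have h := hc 2
  rw [show Finset.Icc 1 2 = {1, 2} from rfl, Finset.prod_pair (by decide)] at h
  simp only [← mul_assoc, coeff_mul_one_sub_X_pow, coeff_mk] at h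
  have h0 := cN_zero N c hc
  have h1 := cN_one N c hc hN
  split_ifs with hN2
  · subst hN2
    norm_num at h
    linarith
  · simp (disch := omega) only [if_pos, if_neg] at h
    norm_num at h
    linarith

end

/-- For `N > 1`, `0 ≤ a ≤ 2` and `c_N(n)` defined by
`∑ c_N(n) qⁿ = ∏_{n≥1} 1/((1 - qⁿ)(1 - q^{N n}))` in `ℤ[[q]]`:
if `c_N(3n + a) ≡ 0 (mod 3)` for all `n ≥ 0`, then `N = 2` and `a = 2`. -/
theorem cN_congruence_mod_three_necessary
    (N : ℕ) (hN : 1 < N) (c : ℕ → ℤ)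
    (hc : ∀ n : ℕ, PowerSeries.coeff (R := ℤ) n ((PowerSeries.mk c) *
        ∏ m ∈ Finset.Icc 1 n, ((1 - PowerSeries.X ^ m) * (1 - PowerSeries.X ^ (N * m)))) =
      if n = 0 then 1 else 0)
    (a : ℕ) (ha : a ≤ 2)
    (hcong : ∀ n : ℕ, (3 : ℤ) ∣ c (3 * n + a)) :
    N = 2 ∧ a = 2 := by
  have h3 := hcong 0
  interval_cases a
  · rw [cN_zero N c hc] at h3
    omega
  · rw [cN_one N c hc hN] at h3
    omega
  · rw [cN_two N c hc hN] at h3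
    split_ifs at h3 with hN2
    · exact ⟨hN2, rfl⟩
    · omega
end

section
/- Let N > 1 be an integer, ℓ a prime dividing N, and 0 ≤ a ≤ ℓ-1. Then c_N(ℓn + a) ≡ 0 (mod ℓ) for all integers n ≥ 0 if and only if p(ℓn + a) ≡ 0 (mod ℓ) for all integers n ≥ 0. -/
/-!
The hypothesis says that `C = ∑ c(n) qⁿ` is inverse to `∏ (1 - qᵐ)(1 - q^{Nm})`, so `C = P · R`
with `P = ∑ p(n) qⁿ = ∏ 1/(1 - qᵐ)` and `R = ∏ 1/(1 - q^{Nm})`, the generating function of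
partitions into multiples of `N`. The series `R` has constant term `1` and is supported on
multiples of `N`, hence of `ℓ`; so in `c(m) = ∑ p(m - v) r(v)` only indices `m - v ≡ m (mod ℓ)`
occur. Divisibility of `p` on a residue class therefore gives that of `c`, and conversely by
induction on `m`, isolating the term `v = 0`.
-/

open PowerSeries Finset Nat.Partition
open scoped PowerSeries.WithPiTopology

section Truncation

variable {R : Type*} [CommRing R]

theorem dvd_mul_sub_one {d x y : R} (hx : d ∣ x - 1) (hy : d ∣ y - 1) : d ∣ x * y - 1 := by
  rw [show x * y - 1 = x * (y - 1) + (x - 1) by ring]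
  exact dvd_add (dvd_mul_of_dvd_right hy x) hx

theorem dvd_prod_sub_one {ι : Type*} {d : R} {s : Finset ι} {f : ι → R}
    (h : ∀ i ∈ s, d ∣ f i - 1) : d ∣ ∏ i ∈ s, f i - 1 :=
  prod_induction f (fun x => d ∣ x - 1) (fun _ _ => dvd_mul_sub_one) (by simp) h

theorem X_pow_dvd_one_sub_X_pow_sub_one {n k : ℕ} (h : n ≤ k) :
    (X : R⟦X⟧) ^ n ∣ (1 - X ^ k) - 1 := by
  rw [sub_sub_cancel_left]
  exact dvd_neg.2 (pow_dvd_pow X h)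

theorem coeff_mul_eq_of_X_pow_dvd_sub_one {n : ℕ} {G : R⟦X⟧} (hG : X ^ (n + 1) ∣ G - 1)
    (F : R⟦X⟧) : coeff n (G * F) = coeff n F := by
  obtain ⟨H, hH⟩ := hG
  rw [show G = 1 + X ^ (n + 1) * H by rw [← hH]; ring, add_mul, one_mul, map_add, mul_assoc,
    coeff_X_pow_mul', if_neg (by omega), add_zero]

theorem coeff_mul_eq_of_hasProd [TopologicalSpace R] [DiscreteTopology R] {ι : Type*}
    {f : ι → R⟦X⟧} {g : R⟦X⟧} (hf : HasProd f g) {s : Finset ι} {n : ℕ}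
    (hs : ∀ i ∉ s, X ^ (n + 1) ∣ f i - 1) (F : R⟦X⟧) :
    coeff n (F * g) = coeff n (F * ∏ i ∈ s, f i) := by
  classical
  have hlim : Filter.Tendsto (fun t => coeff n (F * ∏ i ∈ t, f i)) Filter.atTop
      (nhds (coeff n (F * g))) :=
    ((WithPiTopology.continuous_coeff R n).comp (continuous_const_mul F)).tendsto _ |>.comp hf
  -- `R` is discrete, so the `n`-th coefficients of the partial products are eventually constant
  rw [nhds_discrete, Filter.tendsto_pure] at hlim
  obtain ⟨t, ht⟩ := Filter.eventually_atTop.1 hlim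
  have htail : X ^ (n + 1) ∣ ∏ i ∈ (t ∪ s) \ s, f i - 1 :=
    dvd_prod_sub_one fun i hi => hs i (mem_sdiff.1 hi).2
  rw [← ht (t ∪ s) subset_union_left, ← prod_sdiff subset_union_right, mul_left_comm,
    coeff_mul_eq_of_X_pow_dvd_sub_one htail]

end Truncation

section RestrictedPartitions

variable {R : Type*}

theorem mk_card_restricted_mul_eq_one [CommRing R] [TopologicalSpace R] [IsTopologicalRing R]
    [T2Space R] (q : ℕ → Prop) [DecidablePred q] {E : R⟦X⟧}
    (hE : HasProd (fun i => if q (i + 1) then 1 - X ^ (i + 1) else 1) E) :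
    PowerSeries.mk (fun n => (#(restricted n q) : R)) * E = 1 := by
  have hprod := (hasProd_powerSeriesMk_card_restricted R q).mul hE
  have hone : (fun i => (if q (i + 1) then ∑' j : ℕ, (X : R⟦X⟧) ^ ((i + 1) * j) else 1) *
      if q (i + 1) then 1 - X ^ (i + 1) else 1) = fun _ => 1 := by
    ext1 i
    split_ifs
    · simp_rw [pow_mul]
      exact WithPiTopology.tsum_pow_mul_one_sub_of_constantCoeff_eq_zero (by simp)
    · exact mul_one 1
  rw [hone] at hprod
  exact hprod.unique hasProd_one

theorem multipliable_one_sub_X_pow_mul [CommRing R] [TopologicalSpace R] {N : ℕ} (hN : 0 < N) :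
    Multipliable fun i => (1 : R⟦X⟧) - X ^ (N * (i + 1)) := by
  nontriviality R
  simp_rw [sub_eq_add_neg]
  apply WithPiTopology.multipliable_one_add_of_tendsto_order_atTop_nhds_top
  simp_rw [order_neg, order_X_pow]
  exact ENat.tendsto_natCast_nhds_top.comp <| Filter.tendsto_atTop_mono
    (fun i => Nat.le_mul_of_pos_left _ hN) (Filter.tendsto_add_atTop_nat 1)

theorem hasProd_ite_dvd_one_sub_X_pow_iff [CommRing R] [TopologicalSpace R] {N : ℕ} (hN : 0 < N)
    {E : R⟦X⟧} :
    HasProd (fun i => if N ∣ i + 1 then 1 - X ^ (i + 1) else 1) E ↔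
      HasProd (fun i => 1 - X ^ (N * (i + 1))) E := by
  have hpos (i : ℕ) : 0 < N * (i + 1) := Nat.mul_pos hN (Nat.add_one_pos i)
  have hg : Function.Injective fun i => N * (i + 1) - 1 := by
    intro i j h
    have := hpos i
    have := hpos j
    have := Nat.eq_of_mul_eq_mul_left hN (show N * (i + 1) = N * (j + 1) by simp only at h; omega)
    omega
  rw [← hg.hasProd_iff]
  · refine Eq.to_iff (congrArg (HasProd · E) (funext fun i => ?_))
    simp [Nat.sub_add_cancel (hpos i)]
  · intro i hi
    rw [if_neg]
    rintro ⟨_ | k, hk⟩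
    · omega
    · exact hi ⟨k, by simp only; omega⟩

theorem coeff_zero_mk_card_restricted [Semiring R] (q : ℕ → Prop) [DecidablePred q] :
    coeff 0 (PowerSeries.mk fun n => (#(restricted n q) : R)) = 1 := by
  simp [restricted]

theorem dvd_of_coeff_mk_card_restricted_dvd_ne_zero [Semiring R] {N v : ℕ}
    (h : coeff v (PowerSeries.mk fun n => (#(restricted n (N ∣ ·)) : R)) ≠ 0) : N ∣ v := by
  obtain ⟨p, hp⟩ : (restricted v (N ∣ ·)).Nonempty := by
    rw [nonempty_iff_ne_empty]
    rintro hempty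
    simp [hempty] at h
  rw [← p.parts_sum]
  exact Multiset.dvd_sum (mem_filter.1 hp).2

end RestrictedPartitions

section Congruences

variable {R : Type*} [CommRing R]

theorem coeff_mul_eq_sum_range_add (f g : R⟦X⟧) (m : ℕ) :
    coeff m (f * g) = ∑ i ∈ range m, coeff i f * coeff (m - i) g + coeff m f * coeff 0 g := by
  rw [coeff_mul, Nat.sum_antidiagonal_eq_sum_range_succ (fun i j => coeff i f * coeff j g),
    sum_range_succ, Nat.sub_self]

theorem dvd_coeff_mul_iff {f g : R⟦X⟧} {ℓ a : ℕ} (d : R) (hg₀ : coeff 0 g = 1)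
    (hg : ∀ v, coeff v g ≠ 0 → ℓ ∣ v) :
    (∀ m, m ≡ a [MOD ℓ] → d ∣ coeff m (f * g)) ↔ (∀ m, m ≡ a [MOD ℓ] → d ∣ coeff m f) := by
  have hterm : ∀ m i, i < m → (∀ i' < m, i' ≡ a [MOD ℓ] → d ∣ coeff i' f) → m ≡ a [MOD ℓ] →
      d ∣ coeff i f * coeff (m - i) g := by
    intro m i him hf hm
    by_cases hv : coeff (m - i) g = 0
    · simp [hv]
    · have him' : i ≡ m [MOD ℓ] := (Nat.modEq_iff_dvd' him.le).2 (hg _ hv)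
      exact dvd_mul_of_dvd_left (hf i him (him'.trans hm)) _
  constructor
  · intro h m
    induction m using Nat.strong_induction_on with
    | _ m ih =>
      intro hm
      have hsum := dvd_sum fun i hi => hterm m i (mem_range.1 hi) ih hm
      have := dvd_sub (h m hm) hsum
      rwa [coeff_mul_eq_sum_range_add, hg₀, mul_one, add_sub_cancel_left] at this
  · intro h m hm
    rw [coeff_mul_eq_sum_range_add, hg₀, mul_one]
    exact dvd_add (dvd_sum fun i hi => hterm m i (mem_range.1 hi) (fun i' _ => h i') hm) (h m hm)

theorem forall_modEq_iff_forall_mul_add {ℓ a : ℕ} (ha : a < ℓ) {P : ℕ → Prop} :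
    (∀ m, m ≡ a [MOD ℓ] → P m) ↔ ∀ n, P (ℓ * n + a) := by
  refine ⟨fun h n => h _ (by simp [Nat.ModEq]), fun h m hm => ?_⟩
  have hma : m % ℓ = a := Eq.trans hm (Nat.mod_eq_of_lt ha)
  rw [← Nat.div_add_mod m ℓ, hma]
  exact h (m / ℓ)

end Congruences

theorem prod_range_add_one_eq_prod_Icc {M : Type*} [CommMonoid M] (f : ℕ → M) (n : ℕ) :
    ∏ i ∈ range n, f (i + 1) = ∏ m ∈ Icc 1 n, f m := by
  rw [range_eq_Ico, prod_Ico_add' f 0 n 1, zero_add, Ico_add_one_right_eq_Icc]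

theorem mk_eq_mk_card_mul_mk_card_restricted {N : ℕ} (hN : 0 < N) {c : ℕ → ℤ}
    (hc : ∀ n : ℕ, coeff n (PowerSeries.mk c *
      ∏ m ∈ Icc 1 n, ((1 - X ^ m) * (1 - X ^ (N * m)))) = if n = 0 then 1 else 0) :
    PowerSeries.mk c = PowerSeries.mk (fun n => (Fintype.card n.Partition : ℤ)) *
      PowerSeries.mk fun n => (#(restricted n (N ∣ ·)) : ℤ) := by
  set P := PowerSeries.mk fun n => (Fintype.card n.Partition : ℤ)
  set R := PowerSeries.mk fun n => (#(restricted n (N ∣ ·)) : ℤ)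
  obtain ⟨E₁, hE₁⟩ := WithPiTopology.multipliable_one_sub_X_pow ℤ
  obtain ⟨E_N, hE_N⟩ := multipliable_one_sub_X_pow_mul (R := ℤ) hN
  have hP : P * E₁ = 1 := by
    simpa [restricted] using mk_card_restricted_mul_eq_one (fun _ => True) (by simpa using hE₁)
  have hR : R * E_N = 1 :=
    mk_card_restricted_mul_eq_one _ ((hasProd_ite_dvd_one_sub_X_pow_iff hN).2 hE_N)
  have hC : PowerSeries.mk c * (E₁ * E_N) = 1 := by
    ext n
    rw [coeff_mul_eq_of_hasProd (hE₁.mul hE_N) (s := range n), prod_range_add_one_eq_prod_Icc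
      (fun m => (1 - X ^ m) * (1 - X ^ (N * m))), hc n, coeff_one]
    intro i hi
    have hni : n + 1 ≤ i + 1 := by simpa using hi
    exact dvd_mul_sub_one (X_pow_dvd_one_sub_X_pow_sub_one hni)
      (X_pow_dvd_one_sub_X_pow_sub_one (hni.trans (Nat.le_mul_of_pos_left _ hN)))
  calc PowerSeries.mk c = PowerSeries.mk c * (P * E₁) * (R * E_N) := by
        rw [hP, hR, mul_one, mul_one]
    _ = P * R * (PowerSeries.mk c * (E₁ * E_N)) := by ring
    _ = P * R := by rw [hC, mul_one]

/-- For `N > 1`, a prime `ℓ` dividing `N`, `0 ≤ a ≤ ℓ - 1`, and `c_N(n)`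
defined by `∑ c_N(n) qⁿ = ∏_{n≥1} 1/((1 - qⁿ)(1 - q^{N n}))` in `ℤ[[q]]`:
`c_N(ℓ n + a) ≡ 0 (mod ℓ)` for all `n ≥ 0` if and only if `p(ℓ n + a) ≡ 0 (mod ℓ)` for all
`n ≥ 0`, where `p(n) = Fintype.card (Nat.Partition n)` is the partition function. -/
theorem cN_congruence_iff_partition_congruence
    (N : ℕ) (hN : 1 < N) (c : ℕ → ℤ)
    (hc : ∀ n : ℕ, PowerSeries.coeff (R := ℤ) n ((PowerSeries.mk c) *
        ∏ m ∈ Finset.Icc 1 n, ((1 - PowerSeries.X ^ m) * (1 - PowerSeries.X ^ (N * m)))) =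
      if n = 0 then 1 else 0)
    (ℓ : ℕ) (hℓ : ℓ.Prime) (hℓN : ℓ ∣ N) (a : ℕ) (ha : a ≤ ℓ - 1) :
    (∀ n : ℕ, (ℓ : ℤ) ∣ c (ℓ * n + a)) ↔
      (∀ n : ℕ, ℓ ∣ Fintype.card (Nat.Partition (ℓ * n + a))) := by
  have haℓ : a < ℓ := by have := hℓ.pos; omega
  have key := dvd_coeff_mul_iff (f := PowerSeries.mk fun n => (Fintype.card n.Partition : ℤ))
    (ℓ : ℤ) (a := a) (coeff_zero_mk_card_restricted _)
    fun v hv => hℓN.trans (dvd_of_coeff_mk_card_restricted_dvd_ne_zero hv)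
  rw [← mk_eq_mk_card_mul_mk_card_restricted (by omega) hc,
    forall_modEq_iff_forall_mul_add haℓ, forall_modEq_iff_forall_mul_add haℓ] at key
  simpa [Int.natCast_dvd_natCast] using key
end

section
/- Let j be a positive integer and a_1, …, a_j positive integers, define c(n) by ∑_{n≥0} c(n) q^n = ∏_{n≥1} ∏_{i=1}^{j} 1/(1-q^{a_i n}) and N = lcm(a_1, …, a_j). Let ℓ > max(5, j+3) be a prime with ℓ ∤ N, and let a, b ∈ {0, 1, …, ℓ-1} satisfy 24a ≡ 24b + (a_1 + ⋯ + a_j) (mod ℓ). Define d(n) by ∑_{n≥0} d(n) q^n = ∏_{i=1}^{j} ( q^{a_i} ∏_{n≥1} (1-q^{a_i n})^{24} )^{(ℓ²-1)/24} in ℤ[[q]]. Then c(ℓn + a) ≡ 0 (mod ℓ) for all integers n ≥ 0 if and only if d(ℓn + b) ≡ 0 (mod ℓ) for all integers n ≥ 0. -/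
/-!
Work modulo `ℓ` and write `F = ∏ᵢ ∏ₘ (1 - q^{aᵢ m})`, `s = ∑ aᵢ`, `δ = (ℓ² - 1)/24`, so that
`∑ c(n) qⁿ = 1/F`. Since `24δ + 1 = ℓ²`, the series `G = ∑ d(n) qⁿ` satisfies
`G · F = q^{δ s} F^{ℓ²}`, and by Frobenius `F^{ℓ²} ≡ F(q^{ℓ²})`; hence
`G ≡ q^{δ s} · F(q^{ℓ²}) · ∑ c(n) qⁿ (mod ℓ)`. Multiplying by a series in `q^ℓ` with constant
term `1` is invertible and maps each residue class of exponents mod `ℓ` to itself, while the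
factor `q^{δ s}` moves the class of `a` to that of `b`, because `24δ ≡ -1 (mod ℓ)`.
All infinite products are replaced by their truncations at degree `n`, which leaves the
coefficient of `qⁿ` unchanged.
-/

open PowerSeries Finset

namespace CongruenceTransfer

variable {R : Type*} [CommRing R]

theorem dvd_prod_sub_one {ι : Type*} {d : R} {s : Finset ι} {f : ι → R}
    (h : ∀ i ∈ s, d ∣ f i - 1) : d ∣ ∏ i ∈ s, f i - 1 := by
  refine prod_induction f (fun u => d ∣ u - 1) (fun u v hu hv => ?_) (by simp) h
  have : u * v - 1 = u * (v - 1) + (u - 1) := by ring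
  exact this ▸ dvd_add (dvd_mul_of_dvd_right hv u) hu

theorem coeff_mul_of_X_pow_dvd_sub_one {n : ℕ} {u : R⟦X⟧} (hu : X ^ (n + 1) ∣ u - 1)
    (f : R⟦X⟧) : coeff n (f * u) = coeff n f := by
  have hfu : coeff n (f * (u - 1)) = 0 :=
    X_pow_dvd_iff.mp (dvd_mul_of_dvd_right hu f) n n.lt_succ_self
  rwa [mul_sub, mul_one, map_sub, sub_eq_zero] at hfu

noncomputable def eulerTrunc (e n : ℕ) : R⟦X⟧ :=
  ∏ m ∈ Icc 1 n, (1 - X ^ (e * m))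

theorem constantCoeff_eulerTrunc {e : ℕ} (he : 0 < e) (n : ℕ) :
    constantCoeff (eulerTrunc e n : R⟦X⟧) = 1 := by
  refine (map_prod _ _ _).trans (prod_eq_one fun m hm => ?_)
  have : e * m ≠ 0 := Nat.mul_ne_zero he.ne' (by simp at hm; omega)
  simp [this]

theorem exists_eulerTrunc_eq_mul_of_le {e t n : ℕ} (he : 0 < e) (htn : t ≤ n) :
    ∃ u : R⟦X⟧, eulerTrunc e n = eulerTrunc e t * u ∧ X ^ (t + 1) ∣ u - 1 := by
  classical
  refine ⟨∏ m ∈ Icc 1 n \ Icc 1 t, (1 - X ^ (e * m)), ?_, dvd_prod_sub_one fun m hm => ?_⟩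
  · rw [eulerTrunc, eulerTrunc, mul_comm, prod_sdiff (Icc_subset_Icc_right htn)]
  · have htm : t + 1 ≤ e * m := by
      simp only [mem_sdiff, mem_Icc, not_and, not_le] at hm
      nlinarith [hm.2 hm.1.1]
    simpa using pow_dvd_pow (X : R⟦X⟧) htm

variable {ι : Type*} [Fintype ι] {a : ι → ℕ}

theorem coeff_mul_prod_eulerTrunc_of_le (ha : ∀ i, 0 < a i) {t n : ℕ} (htn : t ≤ n)
    (f : R⟦X⟧) :
    coeff t (f * ∏ i, eulerTrunc (a i) n) = coeff t (f * ∏ i, eulerTrunc (a i) t) := by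
  choose u hu hdvd using fun i => exists_eulerTrunc_eq_mul_of_le (R := R) (ha i) htn
  rw [prod_congr rfl fun i _ => hu i, prod_mul_distrib, ← mul_assoc,
    coeff_mul_of_X_pow_dvd_sub_one (dvd_prod_sub_one fun i _ => hdvd i)]

theorem X_pow_succ_dvd_mul_prod_eulerTrunc_sub_one (ha : ∀ i, 0 < a i) {C : R⟦X⟧}
    (hC : ∀ n, coeff n (C * ∏ i, eulerTrunc (a i) n) = if n = 0 then 1 else 0) (n : ℕ) :
    X ^ (n + 1) ∣ C * ∏ i, eulerTrunc (a i) n - 1 := by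
  refine X_pow_dvd_iff.mpr fun t ht => ?_
  rw [map_sub, coeff_mul_prod_eulerTrunc_of_le ha (Nat.lt_succ_iff.mp ht), hC, coeff_one,
    sub_self]

theorem prod_pow_mul_prod {M : Type*} [CommMonoid M] (x : M) (P : ι → M) (k δ : ℕ) :
    (∏ i, (x ^ a i * P i ^ k) ^ δ) * ∏ i, P i =
      x ^ ((∑ i, a i) * δ) * (∏ i, P i) ^ (k * δ + 1) := by
  simp only [mul_pow, prod_mul_distrib, prod_pow, ← pow_mul, prod_pow_eq_pow_sum]
  rw [← sum_mul, pow_succ, mul_comm k δ, mul_assoc]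

theorem coeff_prod_X_pow_mul_eulerTrunc_pow (ha : ∀ i, 0 < a i) {C : R⟦X⟧}
    (hC : ∀ n, coeff n (C * ∏ i, eulerTrunc (a i) n) = if n = 0 then 1 else 0) (k δ n : ℕ) :
    coeff n (∏ i, (X ^ a i * eulerTrunc (a i) n ^ k) ^ δ) =
      coeff n (X ^ ((∑ i, a i) * δ) * (∏ i, eulerTrunc (a i) n) ^ (k * δ + 1) * C) := by
  rw [← coeff_mul_of_X_pow_dvd_sub_one (X_pow_succ_dvd_mul_prod_eulerTrunc_sub_one ha hC n),
    ← mul_assoc, mul_right_comm, prod_pow_mul_prod]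

theorem pow_char_eq_expand_of_mem_closure {p : ℕ} [hp : Fact p.Prime] [CharP R p]
    {f : R⟦X⟧} (hf : f ∈ Subring.closure {X}) : f ^ p = expand p hp.out.ne_zero f := by
  have : CharP R⟦X⟧ p := charP_of_injective_ringHom (C_injective (R := R)) p
  have hle : Subring.closure {X} ≤
      RingHom.eqLocus (frobenius R⟦X⟧ p) (expand p hp.out.ne_zero : R⟦X⟧ →ₐ[R] R⟦X⟧) :=
    Subring.closure_le.mpr (by simp [frobenius_def])
  exact hle hf

theorem eulerTrunc_mem_closure (e n : ℕ) : (eulerTrunc e n : R⟦X⟧) ∈ Subring.closure {X} :=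
  Subring.prod_mem _ fun _ _ =>
    sub_mem (one_mem _) (pow_mem (Subring.subset_closure (Set.mem_singleton _)) _)

section Transfer

variable {ℓ r : ℕ} (hℓ : ℓ ≠ 0)

theorem coeff_expand_mul_eq_zero_of_modEq (φ : R⟦X⟧) {C : R⟦X⟧}
    (hC : ∀ t, t ≡ r [MOD ℓ] → coeff t C = 0) {t : ℕ} (ht : t ≡ r [MOD ℓ]) :
    coeff t (expand ℓ hℓ φ * C) = 0 := by
  rw [coeff_mul]
  refine sum_eq_zero fun ⟨p, q⟩ hpq => ?_
  rw [coeff_expand]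
  split_ifs with hp
  · have hq : q ≡ r [MOD ℓ] :=
      Nat.ModEq.add_left_cancel (Nat.modEq_zero_iff_dvd.mpr hp)
        (by rwa [zero_add, mem_antidiagonal.mp hpq])
    rw [hC q hq, mul_zero]
  · rw [zero_mul]

theorem coeff_eq_zero_of_coeff_expand_mul_eq_zero (φ : ℕ → R⟦X⟧)
    (hφ : ∀ t, constantCoeff (φ t) = 1) {C : R⟦X⟧}
    (h : ∀ t, t ≡ r [MOD ℓ] → coeff t (expand ℓ hℓ (φ t) * C) = 0) :
    ∀ t, t ≡ r [MOD ℓ] → coeff t C = 0 := by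
  -- `coeff t (expand ℓ (φ t) * C)` is `coeff t C` plus multiples of earlier coefficients of `C`
  -- in the same residue class
  intro t
  induction t using Nat.strong_induction_on with
  | _ t ih =>
    intro ht
    rw [← h t ht, coeff_mul, sum_eq_single_of_mem (0, t) (by simp)]
    · simp [hφ]
    rintro ⟨p, q⟩ hpq hne
    have hpq : p + q = t := mem_antidiagonal.mp hpq
    rw [coeff_expand]
    split_ifs with hp
    · have hq : q ≡ r [MOD ℓ] :=
        Nat.ModEq.add_left_cancel (Nat.modEq_zero_iff_dvd.mpr hp) (by rwa [zero_add, hpq])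
      have hp0 : p ≠ 0 := by rintro rfl; exact hne (by rw [← hpq, zero_add])
      rw [ih q (by omega) hq, mul_zero]
    · rw [zero_mul]

theorem forall_modEq_coeff_eq_zero_iff (φ : ℕ → R⟦X⟧) (hφ : ∀ t, constantCoeff (φ t) = 1)
    (C : R⟦X⟧) {s r' : ℕ} {D : ℕ → R} (hD : ∀ n, D n = coeff n (X ^ s * expand ℓ hℓ (φ n) * C))
    (hr' : r' ≡ r + s [MOD ℓ]) :
    (∀ t, t ≡ r [MOD ℓ] → coeff t C = 0) ↔ ∀ t, t ≡ r' [MOD ℓ] → D t = 0 := by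
  constructor
  · intro hC t ht
    replace ht := ht.trans hr'
    rw [hD, mul_assoc, coeff_X_pow_mul']
    split_ifs with hst
    · exact coeff_expand_mul_eq_zero_of_modEq hℓ _ hC
        (Nat.ModEq.add_right_cancel' s (by rwa [Nat.sub_add_cancel hst]))
    · rfl
  · refine fun hD0 => coeff_eq_zero_of_coeff_expand_mul_eq_zero hℓ (fun t => φ (t + s))
      (fun t => hφ _) fun t ht => ?_
    rw [← coeff_X_pow_mul _ s, ← mul_assoc, ← hD]
    exact hD0 _ ((Nat.ModEq.add_right s ht).trans hr'.symm)

end Transfer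

theorem forall_mul_add_iff_forall_modEq {ℓ r : ℕ} (hr : r < ℓ) {P : ℕ → Prop} :
    (∀ n, P (ℓ * n + r)) ↔ ∀ t, t ≡ r [MOD ℓ] → P t := by
  refine ⟨fun h t ht => ?_, fun h n => h _ (by simp [Nat.ModEq])⟩
  have ht' : t % ℓ = r := Eq.trans ht (Nat.mod_eq_of_lt hr)
  have := h (t / ℓ)
  rwa [← ht', Nat.div_add_mod] at this

theorem mul_sq_sub_one_div_24_add_one {ℓ : ℕ} (hℓ : ℓ.Prime) (h3 : 3 < ℓ) :
    24 * ((ℓ ^ 2 - 1) / 24) + 1 = ℓ ^ 2 := by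
  have h2 : ℓ % 2 = 1 := Nat.odd_iff.mp (hℓ.odd_of_ne_two (by omega))
  have hmod3 : ℓ % 3 ≠ 0 := fun h => by
    have := (Nat.prime_dvd_prime_iff_eq Nat.prime_three hℓ).mp (Nat.dvd_of_mod_eq_zero h)
    omega
  have key : ∀ r < 24, r % 2 = 1 → r % 3 ≠ 0 → r ^ 2 % 24 = 1 := by decide
  have hmod : ℓ ^ 2 % 24 = 1 := by
    rw [Nat.pow_mod]
    exact key _ (Nat.mod_lt _ (by norm_num)) (by omega) (by omega)
  have : 1 ≤ ℓ ^ 2 := Nat.one_le_pow _ _ hℓ.pos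
  omega

theorem modEq_add_mul_of_dvd_sub {ℓ a₀ b s δ : ℕ} (hℓ : ℓ.Prime) (h3 : 3 < ℓ)
    (hδ : 24 * δ + 1 = ℓ ^ 2) (hab : (ℓ : ℤ) ∣ 24 * a₀ - (24 * b + s)) :
    b ≡ a₀ + s * δ [MOD ℓ] := by
  have := Fact.mk hℓ
  have h24 : (24 : ZMod ℓ) ≠ 0 := by
    intro h
    have hdvd : ℓ ∣ 24 := (ZMod.natCast_eq_zero_iff 24 ℓ).mp (by exact_mod_cast h)
    rcases (Nat.Prime.dvd_mul hℓ).mp (show ℓ ∣ 2 ^ 3 * 3 from hdvd) with h2 | h3'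
    · exact absurd (Nat.le_of_dvd two_pos (hℓ.dvd_of_dvd_pow h2)) (by omega)
    · exact absurd (Nat.le_of_dvd three_pos h3') (by omega)
  have hδ' : (24 : ZMod ℓ) * δ = -1 := by
    have := congrArg (Nat.cast : ℕ → ZMod ℓ) hδ
    push_cast [ZMod.natCast_self] at this
    linear_combination this
  have hab' : (24 * a₀ - (24 * b + s) : ZMod ℓ) = 0 := by
    exact_mod_cast (ZMod.intCast_zmod_eq_zero_iff_dvd _ ℓ).mpr hab
  rw [← ZMod.natCast_eq_natCast_iff]
  apply mul_left_cancel₀ h24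
  push_cast
  linear_combination -hab' - (s : ZMod ℓ) * hδ'

end CongruenceTransfer

open CongruenceTransfer

theorem congruence_transfer_to_delta_power_general
    (j : ℕ) (a : Fin j → ℕ) (ha : ∀ i, 0 < a i)
    (c : ℕ → ℤ)
    (hc : ∀ n : ℕ, PowerSeries.coeff (R := ℤ) n ((PowerSeries.mk c) *
        ∏ i : Fin j, ∏ m ∈ Finset.Icc 1 n, (1 - PowerSeries.X ^ (a i * m))) =
      if n = 0 then 1 else 0)
    (ℓ : ℕ) (hℓ : ℓ.Prime) (hℓbig : max 5 (j + 3) < ℓ)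
    (a₀ b : ℕ) (ha₀ : a₀ ≤ ℓ - 1) (hb : b ≤ ℓ - 1)
    (hab : (ℓ : ℤ) ∣ (24 * (a₀ : ℤ) - (24 * (b : ℤ) + ∑ i : Fin j, (a i : ℤ))))
    (d : ℕ → ℤ)
    (hd : ∀ n : ℕ, d n = PowerSeries.coeff (R := ℤ) n (∏ i : Fin j,
      (PowerSeries.X ^ (a i) *
        ∏ m ∈ Finset.Icc 1 n, (1 - PowerSeries.X ^ (a i * m)) ^ 24) ^ ((ℓ ^ 2 - 1) / 24))) :
    (∀ n : ℕ, (ℓ : ℤ) ∣ c (ℓ * n + a₀)) ↔ (∀ n : ℕ, (ℓ : ℤ) ∣ d (ℓ * n + b)) := by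
  have h3 : 3 < ℓ := lt_of_le_of_lt (by omega) hℓbig
  have := Fact.mk hℓ
  set δ := (ℓ ^ 2 - 1) / 24
  have hδ : 24 * δ + 1 = ℓ ^ 2 := mul_sq_sub_one_div_24_add_one hℓ h3
  set C := map (Int.castRingHom (ZMod ℓ)) (mk c)
  have hC : ∀ n, coeff n (C * ∏ i, eulerTrunc (a i) n) = if n = 0 then 1 else 0 := fun n => by
    have h := congrArg (Int.castRingHom (ZMod ℓ)) (hc n)
    rw [← coeff_map, apply_ite (Int.castRingHom (ZMod ℓ)), map_one, map_zero] at h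
    simpa only [eulerTrunc, map_mul, map_prod, map_sub, map_one, map_pow, map_X] using h
  have hD : ∀ n, (d n : ZMod ℓ) = coeff n (X ^ ((∑ i, a i) * δ) *
      expand ℓ hℓ.ne_zero ((∏ i, eulerTrunc (a i) n) ^ ℓ) * C) := fun n => by
    rw [← pow_char_eq_expand_of_mem_closure
        (pow_mem (prod_mem fun i _ => eulerTrunc_mem_closure _ _) _),
      ← pow_mul, ← sq, ← hδ, ← coeff_prod_X_pow_mul_eulerTrunc_pow ha hC, hd]
    rw [← eq_intCast (Int.castRingHom (ZMod ℓ)), ← coeff_map]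
    simp only [eulerTrunc, map_prod, map_mul, map_pow, map_sub, map_one, map_X, prod_pow]
  rw [forall_mul_add_iff_forall_modEq (P := fun t => (ℓ : ℤ) ∣ c t) (by omega),
    forall_mul_add_iff_forall_modEq (P := fun t => (ℓ : ℤ) ∣ d t) (by omega)]
  have hCc : ∀ t, coeff t C = (c t : ZMod ℓ) := fun t => by simp [C]
  simp_rw [← ZMod.intCast_zmod_eq_zero_iff_dvd, ← hCc]
  exact forall_modEq_coeff_eq_zero_iff hℓ.ne_zero _
    (fun n => by simp [constantCoeff_eulerTrunc (ha _)]) C hD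
    (modEq_add_mul_of_dvd_sub hℓ h3 hδ (by push_cast; exact hab))

/-- Let `a₁, …, a_j` be positive integers, `c(n)` defined by
`∑ c(n) qⁿ = ∏_{n≥1} ∏_{i=1}^j 1/(1 - q^{aᵢ n})` in `ℤ[[q]]`, `N = lcm(a₁, …, a_j)`,
`ℓ > max(5, j+3)` a prime with `ℓ ∤ N`, `a, b ∈ {0, …, ℓ-1}` with
`24a ≡ 24b + (a₁ + ⋯ + a_j) (mod ℓ)`, and `d(n)` defined by
`∑ d(n) qⁿ = ∏_{i=1}^j (q^{aᵢ} ∏_{n≥1} (1 - q^{aᵢ n})^24)^{(ℓ²-1)/24}`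
(characterized coefficientwise via truncated products). Then
`c(ℓn + a) ≡ 0 (mod ℓ)` for all `n ≥ 0` iff `d(ℓn + b) ≡ 0 (mod ℓ)` for all `n ≥ 0`. -/
theorem congruence_transfer_to_delta_power
    (j : ℕ) (hj : 0 < j) (a : Fin j → ℕ) (ha : ∀ i, 0 < a i)
    (c : ℕ → ℤ)
    (hc : ∀ n : ℕ, PowerSeries.coeff (R := ℤ) n ((PowerSeries.mk c) *
        ∏ i : Fin j, ∏ m ∈ Finset.Icc 1 n, (1 - PowerSeries.X ^ (a i * m))) =
      if n = 0 then 1 else 0)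
    (N : ℕ) (hN : N = Finset.univ.lcm a)
    (ℓ : ℕ) (hℓ : ℓ.Prime) (hℓbig : max 5 (j + 3) < ℓ) (hℓN : ¬ ℓ ∣ N)
    (a₀ b : ℕ) (ha₀ : a₀ ≤ ℓ - 1) (hb : b ≤ ℓ - 1)
    (hab : (ℓ : ℤ) ∣ (24 * (a₀ : ℤ) - (24 * (b : ℤ) + ∑ i : Fin j, (a i : ℤ))))
    (d : ℕ → ℤ)
    (hd : ∀ n : ℕ, d n = PowerSeries.coeff (R := ℤ) n (∏ i : Fin j,
      (PowerSeries.X ^ (a i) *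
        ∏ m ∈ Finset.Icc 1 n, (1 - PowerSeries.X ^ (a i * m)) ^ 24) ^ ((ℓ ^ 2 - 1) / 24))) :
    (∀ n : ℕ, (ℓ : ℤ) ∣ c (ℓ * n + a₀)) ↔ (∀ n : ℕ, (ℓ : ℤ) ∣ d (ℓ * n + b)) :=
  congruence_transfer_to_delta_power_general j a ha c hc ℓ hℓ hℓbig a₀ b ha₀ hb hab d hd
end
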